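/- Polarization does not decrease the fractional Gagliardo seminorm: for H a closed half-space of ℝ^N containing 0, s ∈ (0,1), p ≥ 1, and u : ℝ^N → ℝ⁺ measurable, ∫∫ |u^H(x)−u^H(y)|^p / |x−y|^{N+ps} dx dy ≤ ∫∫ |u(x)−u(y)|^p / |x−y|^{N+ps} dx dy. -/

import Mathlib

/-!
Let `H° = {c < ⟪x, e⟫}`. Up to the null hyperplane `{⟪x, e⟫ = c}`, the reflection `σ` maps
`H°` onto its complement, so both double integrals fold onto `H° × H°`, the integrand
being replaced by its sum over the four points `(x, y)`, `(x, σ y)`, `(σ x, y)`, `(σ x, σ y)`.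
For `x, y ∈ H°` the pair of weights is ordered, `‖x - y‖ ≤ ‖x - σ y‖`, while polarization
replaces `(u x, u (σ x))` by its `(max, min)`. The pointwise comparison that remains is the
two-point inequality for the convex function `|t| ^ p`: after sorting, it reduces to
`φ u + φ v ≤ φ U + φ V` whenever `u + v = U + V` and `u` lies between `V` and `U`.
-/

open MeasureTheory Set Function

open scoped ENNReal RealInnerProductSpace

theorem ConvexOn.map_add_map_le_of_mem_Icc {φ : ℝ → ℝ} {s : Set ℝ} (hφ : ConvexOn ℝ s φ)
    {u v U V : ℝ} (hV : V ∈ s) (hU : U ∈ s) (hu : u ∈ Icc V U) (huv : u + v = U + V) :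
    φ u + φ v ≤ φ U + φ V := by
  rw [← segment_eq_Icc (hu.1.trans hu.2)] at hu
  obtain ⟨a, b, ha, hb, hab, rfl⟩ := hu
  have hv : v = b • V + a • U := by
    simp only [smul_eq_mul] at huv ⊢
    linear_combination huv - (V + U) * hab
  have hu := hφ.2 hV hU ha hb hab
  have hv' := hφ.2 hV hU hb ha ((add_comm b a).trans hab)
  rw [hv]
  simp only [smul_eq_mul] at hu hv' ⊢
  linear_combination hu + hv' + (φ U + φ V) * hab

theorem ConvexOn.polarization_two_point_le {φ : ℝ → ℝ} (hφ : ConvexOn ℝ univ φ) {w₁ w₂ : ℝ}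
    (hw : w₂ ≤ w₁) (a a' b b' : ℝ) :
    φ (max a a' - max b b') * w₁ + φ (max a a' - min b b') * w₂ +
        (φ (min a a' - max b b') * w₂ + φ (min a a' - min b b') * w₁) ≤
      φ (a - b) * w₁ + φ (a - b') * w₂ + (φ (a' - b) * w₂ + φ (a' - b') * w₁) := by
  have hw' : 0 ≤ w₁ - w₂ := sub_nonneg.2 hw
  rcases le_total a' a with ha | ha <;> rcases le_total b' b with hb | hb <;>
    simp only [max_eq_left, max_eq_right, min_eq_left, min_eq_right, ha, hb]
  · rfl
  · have := hφ.map_add_map_le_of_mem_Icc (mem_univ (a' - b')) (mem_univ (a - b))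
      (u := a - b') (v := a' - b) ⟨by linarith, by linarith⟩ (by ring)
    nlinarith [mul_nonneg hw' (sub_nonneg.2 this)]
  · have := hφ.map_add_map_le_of_mem_Icc (mem_univ (a - b)) (mem_univ (a' - b'))
      (u := a - b') (v := a' - b) ⟨by linarith, by linarith⟩ (by ring)
    nlinarith [mul_nonneg hw' (sub_nonneg.2 this)]
  · linarith

theorem convexOn_abs_rpow {p : ℝ} (hp : 1 ≤ p) : ConvexOn ℝ univ fun t : ℝ ↦ |t| ^ p := by
  have him : ((‖·‖ : ℝ → ℝ) '' univ) = Ici 0 := by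
    ext t
    simpa using ⟨by rintro ⟨y, rfl⟩; exact abs_nonneg y, fun ht ↦ ⟨t, abs_of_nonneg ht⟩⟩
  refine (him ▸ convexOn_rpow hp).comp (convexOn_norm convex_univ) (him ▸ ?_)
  exact fun x hx y _ hxy ↦ Real.rpow_le_rpow hx hxy (by linarith)

section Involution

variable {X : Type*} [MeasurableSpace X] {μ : Measure X} {σ : X → X} {A : Set X}

def reflectionOrbitSum (σ : X → X) (F : X → X → ℝ≥0∞) (x y : X) : ℝ≥0∞ :=
  F x y + F x (σ y) + (F (σ x) y + F (σ x) (σ y))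

theorem lintegral_eq_setLIntegral_add_comp_involutive (hσ : MeasurePreserving σ μ μ)
    (hσσ : Involutive σ) (hA : MeasurableSet A) (hσA : σ ⁻¹' A =ᵐ[μ] (Aᶜ : Set X))
    {φ : X → ℝ≥0∞} (hφ : Measurable φ) :
    ∫⁻ x, φ x ∂μ = ∫⁻ x in A, (φ x + φ (σ x)) ∂μ := by
  have hσσA : σ ⁻¹' (σ ⁻¹' A) = A := by rw [← preimage_comp, hσσ.comp_self, preimage_id]
  have hcompl : ∫⁻ x in Aᶜ, φ x ∂μ = ∫⁻ x in A, φ (σ x) ∂μ := by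
    rw [← setLIntegral_congr hσA, ← hσσA, hσ.setLIntegral_comp_preimage_emb
      (MeasurableEquiv.ofInvolutive σ hσσ hσ.measurable).measurableEmbedding, hσσA]
  rw [← lintegral_add_compl φ hA, hcompl, lintegral_add_left hφ]

theorem lintegral_lintegral_eq_setLIntegral_setLIntegral_involutive [SFinite μ]
    (hσ : MeasurePreserving σ μ μ) (hσσ : Involutive σ) (hA : MeasurableSet A)
    (hσA : σ ⁻¹' A =ᵐ[μ] (Aᶜ : Set X)) (F : X → X → ℝ≥0∞) (hF : Measurable (uncurry F)) :
    ∫⁻ x, ∫⁻ y, F x y ∂μ ∂μ =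
      ∫⁻ x in A, ∫⁻ y in A, reflectionOrbitSum σ F x y ∂μ ∂μ := by
  have hG : Measurable (uncurry fun x y ↦ F x y + F x (σ y)) :=
    hF.add (hF.comp (measurable_fst.prodMk (hσ.measurable.comp measurable_snd)))
  calc ∫⁻ x, ∫⁻ y, F x y ∂μ ∂μ = ∫⁻ x, ∫⁻ y in A, (F x y + F x (σ y)) ∂μ ∂μ :=
        lintegral_congr fun x ↦
          lintegral_eq_setLIntegral_add_comp_involutive hσ hσσ hA hσA hF.of_uncurry_left
    _ = ∫⁻ x in A, (∫⁻ y in A, (F x y + F x (σ y)) ∂μ +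
          ∫⁻ y in A, (F (σ x) y + F (σ x) (σ y)) ∂μ) ∂μ :=
        lintegral_eq_setLIntegral_add_comp_involutive hσ hσσ hA hσA hG.lintegral_prod_right'
    _ = _ := lintegral_congr fun x ↦ (lintegral_add_left (hG.of_uncurry_left (x := x)) _).symm

end Involution

section Gagliardo

variable {E : Type*} [NormedAddCommGroup E] {p α : ℝ}

noncomputable def gagliardoIntegrand (p α : ℝ) (f : E → ℝ) (x y : E) : ℝ≥0∞ :=
  ENNReal.ofReal (|f x - f y| ^ p / ‖x - y‖ ^ α)

theorem measurable_gagliardoIntegrand [MeasurableSpace E] [BorelSpace E]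
    [SecondCountableTopology E] {f : E → ℝ} (hf : Measurable f) :
    Measurable (uncurry (gagliardoIntegrand p α f)) := by
  unfold gagliardoIntegrand
  fun_prop

theorem gagliardoIntegrand_self (hp : p ≠ 0) (f : E → ℝ) (x : E) :
    gagliardoIntegrand p α f x x = 0 := by
  rw [gagliardoIntegrand, sub_self, abs_zero, Real.zero_rpow hp, zero_div, ENNReal.ofReal_zero]

theorem ofReal_polarization_two_point_le (hp : 1 ≤ p) (hα : 0 ≤ α) {r₁ r₂ : ℝ} (hr₁ : 0 < r₁)
    (hr : r₁ ≤ r₂) (a a' b b' : ℝ) :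
    ENNReal.ofReal (|max a a' - max b b'| ^ p / r₁ ^ α) +
        ENNReal.ofReal (|max a a' - min b b'| ^ p / r₂ ^ α) +
        (ENNReal.ofReal (|min a a' - max b b'| ^ p / r₂ ^ α) +
          ENNReal.ofReal (|min a a' - min b b'| ^ p / r₁ ^ α)) ≤
      ENNReal.ofReal (|a - b| ^ p / r₁ ^ α) + ENNReal.ofReal (|a - b'| ^ p / r₂ ^ α) +
        (ENNReal.ofReal (|a' - b| ^ p / r₂ ^ α) + ENNReal.ofReal (|a' - b'| ^ p / r₁ ^ α)) := by
  have hw : (r₂ ^ α)⁻¹ ≤ (r₁ ^ α)⁻¹ :=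
    inv_anti₀ (Real.rpow_pos_of_pos hr₁ α) (Real.rpow_le_rpow hr₁.le hr hα)
  have hr₂ : 0 < r₂ := hr₁.trans_le hr
  simp only [div_eq_mul_inv]
  repeat rw [← ENNReal.ofReal_add (by positivity) (by positivity)]
  exact ENNReal.ofReal_le_ofReal ((convexOn_abs_rpow hp).polarization_two_point_le hw a a' b b')

end Gagliardo

section InnerProductSpace

variable {E : Type*} [NormedAddCommGroup E] [InnerProductSpace ℝ E]

noncomputable def hyperplaneReflection (e : E) (c : ℝ) (x : E) : E := x - (2 * (⟪x, e⟫ - c)) • e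

noncomputable def polarization (e : E) (c : ℝ) (u : E → ℝ) (x : E) : ℝ :=
  if c ≤ ⟪x, e⟫ then max (u x) (u (hyperplaneReflection e c x))
  else min (u x) (u (hyperplaneReflection e c x))

theorem addHaar_setOf_inner_eq [FiniteDimensional ℝ E] [MeasurableSpace E] [BorelSpace E]
    (μ : Measure E) [μ.IsAddHaarMeasure] {e : E} (he : e ≠ 0) (c : ℝ) :
    μ {x | ⟪x, e⟫ = c} = 0 := by
  have hee : ⟪e, e⟫ ≠ 0 := inner_self_ne_zero.2 he
  have hplane : {x : E | ⟪x, e⟫ = c} = (· + (-(c / ⟪e, e⟫)) • e) ⁻¹' (ℝ ∙ e)ᗮ := by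
    ext x
    simp only [mem_ofPred_eq, mem_preimage, SetLike.mem_coe,
      Submodule.mem_orthogonal_singleton_iff_inner_right, inner_add_right, real_inner_smul_right,
      neg_mul, div_mul_cancel₀ _ hee, real_inner_comm e x, ← sub_eq_add_neg, sub_eq_zero]
  rw [hplane, measure_preimage_add_right]
  refine Measure.addHaar_submodule _ _ fun htop ↦ he ?_
  rwa [Submodule.orthogonal_eq_top_iff, Submodule.span_singleton_eq_bot] at htop

namespace hyperplaneReflection

variable {e : E} (he : ‖e‖ = 1) (c : ℝ)
include he

theorem inner_sub (x : E) : ⟪hyperplaneReflection e c x, e⟫ - c = -(⟪x, e⟫ - c) := by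
  have hee : ⟪e, e⟫ = 1 := by rw [real_inner_self_eq_norm_sq, he, one_pow]
  rw [hyperplaneReflection, inner_sub_left, real_inner_smul_left, hee]
  ring

theorem involutive : Involutive (hyperplaneReflection e c) := fun x ↦ by
  have h := inner_sub he c x
  rw [sub_eq_iff_eq_add] at h
  rw [hyperplaneReflection, h, hyperplaneReflection]
  module

theorem eq_reflection_add (x : E) :
    hyperplaneReflection e c x = (ℝ ∙ e)ᗮ.reflection x + (2 * c) • e := by
  rw [Submodule.reflection_orthogonal_apply, Submodule.reflection_singleton_apply, he,
    real_inner_comm, hyperplaneReflection]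
  module

theorem norm_apply_sub_apply (x y : E) :
    ‖hyperplaneReflection e c x - hyperplaneReflection e c y‖ = ‖x - y‖ := by
  rw [eq_reflection_add he, eq_reflection_add he, add_sub_add_right_eq_sub, ← map_sub,
    LinearIsometryEquiv.norm_map]

theorem norm_apply_sub (x y : E) :
    ‖hyperplaneReflection e c x - y‖ = ‖x - hyperplaneReflection e c y‖ := by
  conv_lhs => rw [← involutive he c y]
  exact norm_apply_sub_apply he c x _

theorem norm_sub_apply_sq (x y : E) :
    ‖x - hyperplaneReflection e c y‖ ^ 2 = ‖x - y‖ ^ 2 + 4 * (⟪x, e⟫ - c) * (⟪y, e⟫ - c) := by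
  rw [hyperplaneReflection, sub_sub_eq_add_sub, add_sub_right_comm, norm_add_sq_real, norm_smul,
    he, real_inner_smul_right, inner_sub_left, Real.norm_eq_abs, mul_one, sq_abs]
  ring

theorem norm_sub_le_norm_sub_apply {x y : E} (hx : c ≤ ⟪x, e⟫) (hy : c ≤ ⟪y, e⟫) :
    ‖x - y‖ ≤ ‖x - hyperplaneReflection e c y‖ := by
  rw [← sq_le_sq₀ (norm_nonneg _) (norm_nonneg _), norm_sub_apply_sq he]
  nlinarith [mul_nonneg (sub_nonneg.2 hx) (sub_nonneg.2 hy)]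

variable [FiniteDimensional ℝ E] [MeasurableSpace E] [BorelSpace E]

theorem measurePreserving : MeasurePreserving (hyperplaneReflection e c) := by
  have h : hyperplaneReflection e c = (· + (2 * c) • e) ∘ (ℝ ∙ e)ᗮ.reflection :=
    funext (eq_reflection_add he c)
  rw [h]
  exact (measurePreserving_add_right _ _).comp (LinearIsometryEquiv.measurePreserving _)

theorem preimage_setOf_lt_ae_eq_compl :
    hyperplaneReflection e c ⁻¹' {x | c < ⟪x, e⟫} =ᵐ[volume] ({x | c < ⟪x, e⟫}ᶜ : Set E) := by
  have hpre : hyperplaneReflection e c ⁻¹' {x | c < ⟪x, e⟫} = {x | ⟪x, e⟫ < c} := by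
    ext x
    have := inner_sub he c x
    simp only [mem_preimage, mem_ofPred_eq]
    constructor <;> intro <;> linarith
  have hnull := addHaar_setOf_inner_eq volume (norm_ne_zero_iff.1 (he ▸ one_ne_zero)) c
  rw [hpre]
  refine ae_eq_set.2 ⟨?_, ?_⟩ <;> refine measure_mono_null (fun x hx ↦ ?_) hnull <;>
    simp only [mem_sdiff, mem_compl_iff, mem_ofPred_eq, not_lt] at hx ⊢ <;>
    linarith [hx.1, hx.2]

end hyperplaneReflection

section Polarization

variable {e : E} {c : ℝ} {u : E → ℝ}

theorem polarization_of_le {x : E} (hx : c ≤ ⟪x, e⟫) :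
    polarization e c u x = max (u x) (u (hyperplaneReflection e c x)) :=
  if_pos hx

theorem polarization_hyperplaneReflection_of_lt (he : ‖e‖ = 1) {x : E} (hx : c < ⟪x, e⟫) :
    polarization e c u (hyperplaneReflection e c x) =
      min (u x) (u (hyperplaneReflection e c x)) := by
  have := hyperplaneReflection.inner_sub he c x
  rw [polarization, if_neg (by linarith), hyperplaneReflection.involutive he c x, min_comm]

theorem measurable_polarization [MeasurableSpace E] [BorelSpace E] (hu : Measurable u) :
    Measurable (polarization e c u) := by
  have hσ : Continuous (hyperplaneReflection e c) := by unfold hyperplaneReflection; fun_prop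
  exact Measurable.ite (measurableSet_le measurable_const (by fun_prop))
    (hu.max (hu.comp hσ.measurable)) (hu.min (hu.comp hσ.measurable))

theorem reflectionOrbitSum_gagliardoIntegrand_polarization_le {p α : ℝ} (hp : 1 ≤ p)
    (hα : 0 ≤ α) (he : ‖e‖ = 1) (u : E → ℝ) {x y : E} (hx : c < ⟪x, e⟫) (hy : c < ⟪y, e⟫) :
    reflectionOrbitSum (hyperplaneReflection e c) (gagliardoIntegrand p α (polarization e c u))
        x y ≤
      reflectionOrbitSum (hyperplaneReflection e c) (gagliardoIntegrand p α u) x y := by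
  simp only [reflectionOrbitSum, gagliardoIntegrand]
  rw [polarization_of_le hx.le, polarization_of_le hy.le,
    polarization_hyperplaneReflection_of_lt he hx, polarization_hyperplaneReflection_of_lt he hy,
    hyperplaneReflection.norm_apply_sub_apply he, hyperplaneReflection.norm_apply_sub he]
  rcases eq_or_ne x y with rfl | hxy
  · -- `‖x - x‖ ^ α = 0` makes the weight `1 / 0 = 0`, so the weights are not ordered here,
    -- but both sides coincide
    rw [abs_sub_comm (min _ _), max_sub_min_eq_abs, abs_abs, abs_sub_comm (u _) (u x)]
    simp only [sub_self, le_refl]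
  · exact ofReal_polarization_two_point_le hp hα (norm_pos_iff.2 (sub_ne_zero.2 hxy))
      (hyperplaneReflection.norm_sub_le_norm_sub_apply he c hx.le hy.le) _ _ _ _

end Polarization

end InnerProductSpace

theorem polarization_gagliardo_seminorm_general (N : ℕ) (s p : ℝ) (hs : 0 < s)
    (hp : 1 ≤ p) (e : EuclideanSpace ℝ (Fin N)) (he : ‖e‖ = 1) (c : ℝ)
    (u : EuclideanSpace ℝ (Fin N) → ℝ) (humeas : Measurable u)
    (σ : EuclideanSpace ℝ (Fin N) → EuclideanSpace ℝ (Fin N))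
    (hσ : ∀ x, σ x = x - (2 * ((inner ℝ x e : ℝ) - c)) • e)
    (uH : EuclideanSpace ℝ (Fin N) → ℝ)
    (huH : ∀ x, uH x = if c ≤ (inner ℝ x e : ℝ) then max (u x) (u (σ x))
      else min (u x) (u (σ x))) :
    ∫⁻ x, ∫⁻ y, ENNReal.ofReal (|uH x - uH y| ^ p / ‖x - y‖ ^ ((N : ℝ) + p * s)) ≤
      ∫⁻ x, ∫⁻ y, ENNReal.ofReal (|u x - u y| ^ p / ‖x - y‖ ^ ((N : ℝ) + p * s)) := by
  obtain rfl : σ = hyperplaneReflection e c := funext hσ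
  obtain rfl : uH = polarization e c u := funext huH
  have hα : 0 ≤ (N : ℝ) + p * s := by positivity
  have hA : MeasurableSet {x : EuclideanSpace ℝ (Fin N) | c < ⟪x, e⟫} :=
    measurableSet_lt measurable_const (by fun_prop)
  have fold := lintegral_lintegral_eq_setLIntegral_setLIntegral_involutive
    (hyperplaneReflection.measurePreserving he c) (hyperplaneReflection.involutive he c) hA
    (hyperplaneReflection.preimage_setOf_lt_ae_eq_compl he c)
  change ∫⁻ x, ∫⁻ y, gagliardoIntegrand p _ (polarization e c u) x y ≤
    ∫⁻ x, ∫⁻ y, gagliardoIntegrand p _ u x y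
  rw [fold _ (measurable_gagliardoIntegrand (measurable_polarization humeas)),
    fold _ (measurable_gagliardoIntegrand humeas)]
  exact setLIntegral_mono' hA fun x hx ↦ setLIntegral_mono' hA fun y hy ↦
    reflectionOrbitSum_gagliardoIntegrand_polarization_le hp hα he u hx hy

/-- Polarization does not increase the fractional Gagliardo seminorm:
`∬ |u^H(x)-u^H(y)|^p / |x-y|^{N+ps} ≤ ∬ |u(x)-u(y)|^p / |x-y|^{N+ps}`.
`H = {x : ⟪x, e⟫ ≥ c}` is a closed half-space containing `0`, `σ` its reflection. -/
theorem polarization_gagliardo_seminorm (N : ℕ) (s p : ℝ) (hs : 0 < s) (hs1 : s < 1)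
    (hp : 1 ≤ p) (e : EuclideanSpace ℝ (Fin N)) (he : ‖e‖ = 1) (c : ℝ) (hc : c ≤ 0)
    (u : EuclideanSpace ℝ (Fin N) → ℝ) (hu : ∀ x, 0 ≤ u x) (humeas : Measurable u)
    (σ : EuclideanSpace ℝ (Fin N) → EuclideanSpace ℝ (Fin N))
    (hσ : ∀ x, σ x = x - (2 * ((inner ℝ x e : ℝ) - c)) • e)
    (uH : EuclideanSpace ℝ (Fin N) → ℝ)
    (huH : ∀ x, uH x = if c ≤ (inner ℝ x e : ℝ) then max (u x) (u (σ x))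
      else min (u x) (u (σ x))) :
    ∫⁻ x, ∫⁻ y, ENNReal.ofReal (|uH x - uH y| ^ p / ‖x - y‖ ^ ((N : ℝ) + p * s)) ≤
      ∫⁻ x, ∫⁻ y, ENNReal.ofReal (|u x - u y| ^ p / ‖x - y‖ ^ ((N : ℝ) + p * s)) :=
  polarization_gagliardo_seminorm_general N s p hs hp e he c u humeas σ hσ uH huH
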